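/- Let S be a monoid. Let U_Pr be the class of unitary S-monomorphisms f : X → Y such that Y∖im(f) is a projective S-act, and let E be the class of all S-epimorphisms. Then (U_Pr, E) is a weak factorization system. -/

import Mathlib

universe u

/-- A right `S`-act: a set with a right action of the monoid `S`. -/
structure SAct (S : Type u) [Monoid S] : Type (u + 1) where
  carrier : Type u
  act : carrier → S → carrier
  act_one : ∀ a, act a 1 = a
  act_mul : ∀ a s t, act (act a s) t = act a (s * t)

/-- A map of right `S`-acts. -/
structure SMap {S : Type u} [Monoid S] (A B : SAct S) : Type u where
  toFun : A.carrier → B.carrier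
  map_act : ∀ a s, toFun (A.act a s) = B.act (toFun a) s

namespace SMap

variable {S : Type u} [Monoid S]

/-- Composition of `S`-maps. -/
def comp {A B C : SAct S} (g : SMap B C) (f : SMap A B) : SMap A C :=
  ⟨fun a => g.toFun (f.toFun a), fun a s => by
    show g.toFun (f.toFun (A.act a s)) = C.act (g.toFun (f.toFun a)) s
    rw [f.map_act, g.map_act]⟩

/-- The identity `S`-map. -/
def id (A : SAct S) : SMap A A := ⟨fun a => a, fun _ _ => rfl⟩

end SMap

variable {S : Type u} [Monoid S]

/-- `f` has the left lifting property with respect to `g` (equivalently, `g` has the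
right lifting property with respect to `f`). -/
def Lifts {A B C D : SAct S} (f : SMap A B) (g : SMap C D) : Prop :=
  ∀ (u : SMap A C) (v : SMap B D), g.comp u = v.comp f →
    ∃ h : SMap B C, h.comp f = u ∧ g.comp h = v

/-- A class of `S`-maps. -/
def MapClass (S : Type u) [Monoid S] : Type (u + 1) :=
  ∀ {A B : SAct S}, SMap A B → Prop

/-- `C^□`: the class of maps with the right lifting property with respect to every map of `C`. -/
def rlpC (C : MapClass S) : MapClass S :=
  fun {_ _} g => ∀ {A B : SAct S} (f : SMap A B), C f → Lifts f g

/-- `□C`: the class of maps with the left lifting property with respect to every map of `C`. -/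
def llpC (C : MapClass S) : MapClass S :=
  fun {_ _} f => ∀ {C' D : SAct S} (g : SMap C' D), C g → Lifts f g

/-- `cof(C) = □(C^□)`. -/
def cofC (C : MapClass S) : MapClass S := llpC (rlpC C)

/-- `fib(C) = (□C)^□`. -/
def fibC (C : MapClass S) : MapClass S := rlpC (llpC C)

/-- `(L, R)` is a weak factorization system. -/
structure IsWFS (L R : MapClass S) : Prop where
  rlp_eq : ∀ {A B : SAct S} (g : SMap A B), R g ↔ rlpC L g
  llp_eq : ∀ {A B : SAct S} (f : SMap A B), L f ↔ llpC R f
  factor : ∀ {A B : SAct S} (h : SMap A B),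
    ∃ (C : SAct S) (f : SMap A C) (g : SMap C B), L f ∧ R g ∧ g.comp f = h

/-- `g : A → C` is a retract of `f : A → B`:  there are `α : C → B`, `β : B → C` with
`β ∘ α = 1`, `α ∘ g = f` and `β ∘ f = g`. -/
def RetractOfMap {A B C : SAct S} (g : SMap A C) (f : SMap A B) : Prop :=
  ∃ (α : SMap C B) (β : SMap B C),
    β.comp α = SMap.id C ∧ α.comp g = f ∧ β.comp f = g

/-- The square with sides `f : A → B`, `u : A → X`, `fbar : X → P`, `v : B → P` is a pushout
square (i.e. `fbar` is the pushout of `f` along `u`). -/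
structure IsPushoutSq {A B X P : SAct S}
    (f : SMap A B) (u : SMap A X) (fbar : SMap X P) (v : SMap B P) : Prop where
  comm : fbar.comp u = v.comp f
  ue : ∀ ⦃Q : SAct S⦄ (g' : SMap X Q) (v' : SMap B Q), g'.comp u = v'.comp f →
    ∃! k : SMap P Q, k.comp fbar = g' ∧ k.comp v = v'

/-- The square with sides `pr1 : P → D`, `pr2 : P → A`, `g : A → B`, `v : D → B` is a
pullback square (i.e. `pr1` is the pullback of `g` along `v`). -/
structure IsPullbackSq {P A D B : SAct S}
    (pr1 : SMap P D) (pr2 : SMap P A) (g : SMap A B) (v : SMap D B) : Prop where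
  comm : g.comp pr2 = v.comp pr1
  ue : ∀ ⦃Q : SAct S⦄ (q1 : SMap Q D) (q2 : SMap Q A), g.comp q2 = v.comp q1 →
    ∃! k : SMap Q P, pr1.comp k = q1 ∧ pr2.comp k = q2

/-- `f` is an isomorphism of `S`-acts. -/
def IsIsoMap {A B : SAct S} (f : SMap A B) : Prop :=
  ∃ g : SMap B A, g.comp f = SMap.id A ∧ f.comp g = SMap.id B

/-- A directed system of `S`-acts indexed by the ordinals `< lam`. -/
structure OSeq (S : Type u) [Monoid S] (lam : Ordinal.{u}) where
  obj : ∀ a : Ordinal.{u}, a < lam → SAct S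
  map : ∀ (a b : Ordinal.{u}) (hab : a ≤ b) (hb : b < lam),
    SMap (obj a (lt_of_le_of_lt hab hb)) (obj b hb)
  map_id : ∀ (a : Ordinal.{u}) (ha : a < lam), map a a le_rfl ha = SMap.id (obj a ha)
  map_comp : ∀ (a b c : Ordinal.{u}) (hab : a ≤ b) (hbc : b ≤ c) (hc : c < lam),
    (map b c hbc hc).comp (map a b hab (lt_of_le_of_lt hbc hc)) = map a c (le_trans hab hbc) hc

/-- A cocone over a directed system of `S`-acts indexed by ordinals `< lam`. -/
structure OCocone {lam : Ordinal.{u}} (F : OSeq S lam) where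
  pt : SAct S
  ι : ∀ (a : Ordinal.{u}) (ha : a < lam), SMap (F.obj a ha) pt
  fac : ∀ (a b : Ordinal.{u}) (hab : a ≤ b) (hb : b < lam),
    (ι b hb).comp (F.map a b hab hb) = ι a (lt_of_le_of_lt hab hb)

/-- A cocone is a (directed) colimit if it satisfies the universal property. -/
def IsColimitO {lam : Ordinal.{u}} {F : OSeq S lam} (c : OCocone F) : Prop :=
  ∀ d : OCocone F, ∃! k : SMap c.pt d.pt, ∀ (a : Ordinal.{u}) (ha : a < lam),
    k.comp (c.ι a ha) = d.ι a ha

/-- Restriction of a directed system to the ordinals `< γ`. -/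
def OSeq.restrict {lam : Ordinal.{u}} (F : OSeq S lam) (γ : Ordinal.{u}) (hγ : γ ≤ lam) :
    OSeq S γ where
  obj a ha := F.obj a (lt_of_lt_of_le ha hγ)
  map a b hab hb := F.map a b hab (lt_of_lt_of_le hb hγ)
  map_id a ha := F.map_id a _
  map_comp a b c hab hbc hc := F.map_comp a b c hab hbc _

/-- The cocone over the restriction to `γ` with vertex `F.obj γ`. -/
def OSeq.coconeAt {lam : Ordinal.{u}} (F : OSeq S lam) (γ : Ordinal.{u}) (hγ : γ < lam) :
    OCocone (F.restrict γ hγ.le) where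
  pt := F.obj γ hγ
  ι a ha := F.map a γ ha.le hγ
  fac a b hab hb := F.map_comp a b γ hab hb.le hγ

/-- A `λ`-sequence: a directed system of `S`-acts indexed by the ordinals `< λ`, together
with a directed colimit, which is continuous at every limit ordinal `γ ≤ λ`. -/
structure LambdaSequence (S : Type u) [Monoid S] (lam : Ordinal.{u}) where
  seq : OSeq S lam
  cocone : OCocone seq
  isColimit : IsColimitO cocone
  continuity : ∀ (γ : Ordinal.{u}) (hγ : γ < lam), Order.IsSuccLimit γ →
    IsColimitO (seq.coconeAt γ hγ)

/-- An ordinal `lam` is `γ`-filtered: it is a limit ordinal and every subset of `lam` of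
cardinality at most `γ` has supremum `< lam`. -/
def IsGammaFiltered (γ : Cardinal.{u}) (lam : Ordinal.{u}) : Prop :=
  Order.IsSuccLimit lam ∧ ∀ A : Set Ordinal.{u}, A ⊆ Set.Iio lam →
    Cardinal.mk A ≤ Cardinal.lift.{u + 1} γ → sSup A < lam

/-- A split monomorphism. -/
def SplitMonoM {A B : SAct S} (f : SMap A B) : Prop :=
  ∃ γ : SMap B A, γ.comp f = SMap.id A

/-- A split epimorphism. -/
def SplitEpiM {A B : SAct S} (f : SMap A B) : Prop :=
  ∃ γ : SMap B A, f.comp γ = SMap.id B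

/-- A unitary monomorphism of `S`-acts. -/
def IsUnitaryMono {X Y : SAct S} (f : SMap X Y) : Prop :=
  Function.Injective f.toFun ∧
    ∀ (y : Y.carrier) (s : S), Y.act y s ∈ Set.range f.toFun → y ∈ Set.range f.toFun

/-- The class of unitary monomorphisms. -/
def UnitaryClass (S : Type u) [Monoid S] : MapClass S := fun {_ _} f => IsUnitaryMono f

/-- The class of split epimorphisms. -/
def SplitEpiClass (S : Type u) [Monoid S] : MapClass S := fun {_ _} f => SplitEpiM f

/-- `P` is projective with respect to the map `f : A → B`. -/
def ProjWrt (P : SAct S) {A B : SAct S} (f : SMap A B) : Prop :=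
  ∀ g : SMap P B, ∃ h : SMap P A, f.comp h = g

/-- `Q` is a retract of the act `P`. -/
def ActRetract (Q P : SAct S) : Prop :=
  ∃ (α : SMap Q P) (β : SMap P Q), β.comp α = SMap.id Q

/-- The coproduct (disjoint union) of two `S`-acts. -/
def SAct.coprod (A B : SAct S) : SAct S where
  carrier := A.carrier ⊕ B.carrier
  act x s := Sum.elim (fun a => Sum.inl (A.act a s)) (fun b => Sum.inr (B.act b s)) x
  act_one x := by cases x <;> simp [SAct.act_one]
  act_mul x s t := by cases x <;> simp [SAct.act_mul]

/-- The coproduct (disjoint union) of a family of `S`-acts. -/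
def SAct.sigmaCoprod {ι : Type u} (F : ι → SAct S) : SAct S where
  carrier := Σ i, (F i).carrier
  act x s := ⟨x.1, (F x.1).act x.2 s⟩
  act_one x := by cases x with | mk i a => exact congrArg (Sigma.mk i) ((F i).act_one a)
  act_mul x s t := by cases x with | mk i a => exact congrArg (Sigma.mk i) ((F i).act_mul a s t)

/-- The coproduct of a family of `S`-maps. -/
def coprodMap {ι : Type u} {A B : ι → SAct S} (f : ∀ i, SMap (A i) (B i)) :
    SMap (SAct.sigmaCoprod A) (SAct.sigmaCoprod B) where
  toFun x := ⟨x.1, (f x.1).toFun x.2⟩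
  map_act x s := congrArg (Sigma.mk x.1) ((f x.1).map_act x.2 s)

/-- An isomorphism class predicate: `A` and `B` are isomorphic `S`-acts. -/
def ActIso (A B : SAct S) : Prop := ∃ f : SMap A B, Function.Bijective f.toFun

/-- `B` is a direct summand of `A`. -/
def IsDirectSummand (B A : SAct S) : Prop := ∃ C : SAct S, ActIso (SAct.coprod B C) A

/-- The subact of `Y` on a subset `T` closed under the action. -/
def SAct.sub (Y : SAct S) (T : Set Y.carrier) (hT : ∀ t ∈ T, ∀ s : S, Y.act t s ∈ T) :
    SAct S where
  carrier := {y // y ∈ T}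
  act t s := ⟨Y.act t.1 s, hT t.1 t.2 s⟩
  act_one t := Subtype.ext (Y.act_one t.1)
  act_mul t s r := Subtype.ext (Y.act_mul t.1 s r)

/-- A class of `S`-acts. -/
def ActClass (S : Type u) [Monoid S] : Type (u + 1) := SAct S → Prop

/-- The class `R_X` of maps with respect to which every act of `X` is projective. -/
def RXClass (𝒳 : ActClass S) : MapClass S :=
  fun {_ _} f => ∀ P : SAct S, 𝒳 P → ProjWrt P f

/-- The class `U_X` of unitary monomorphisms `f : X → Y` with `Y ∖ im f ∈ X`. -/
def UXClass (𝒳 : ActClass S) : MapClass S :=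
  fun {_ Y} f =>
    ∃ (_ : Function.Injective f.toFun)
      (hu : ∀ (y : Y.carrier) (s : S),
        Y.act y s ∈ Set.range f.toFun → y ∈ Set.range f.toFun),
      𝒳 (Y.sub (Set.range f.toFun)ᶜ (fun t ht s hmem => ht (hu t s hmem)))

/-- Every `S`-act has an `𝒳`-precover. -/
def HasPrecover (𝒳 : ActClass S) (A : SAct S) : Prop :=
  ∃ (P : SAct S) (g : SMap P A), 𝒳 P ∧
    ∀ ⦃P' : SAct S⦄ (g' : SMap P' A), 𝒳 P' → ∃ f : SMap P' P, g.comp f = g'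

/-- A projective `S`-act. -/
def ProjectiveAct (P : SAct S) : Prop :=
  ∀ ⦃A B : SAct S⦄ (f : SMap A B), Function.Surjective f.toFun → ProjWrt P f

/-- The class of all surjective `S`-maps (epimorphisms). -/
def EpiClass (S : Type u) [Monoid S] : MapClass S :=
  fun {_ _} f => Function.Surjective f.toFun

/-- The free `S`-act on `n` generators. -/
def freeAct (S : Type u) [Monoid S] (n : ℕ) : SAct S where
  carrier := Fin n × S
  act p s := (p.1, p.2 * s)
  act_one p := by simp
  act_mul p s t := by simp [mul_assoc]

/-- `r` is a congruence on the `S`-act `A`. -/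
def IsCong (A : SAct S) (r : A.carrier → A.carrier → Prop) : Prop :=
  Equivalence r ∧ ∀ (a b : A.carrier) (s : S), r a b → r (A.act a s) (A.act b s)

/-- A finitely presented `S`-act: a quotient of a finitely generated free act by a
finitely generated congruence. -/
def FinPresented (M : SAct S) : Prop :=
  ∃ (n : ℕ) (q : SMap (freeAct S n) M), Function.Surjective q.toFun ∧
    ∃ (m : ℕ) (p : Fin m → (freeAct S n).carrier × (freeAct S n).carrier),
      (∀ i, q.toFun (p i).1 = q.toFun (p i).2) ∧
      ∀ r : (freeAct S n).carrier → (freeAct S n).carrier → Prop, IsCong (freeAct S n) r →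
        (∀ i, r (p i).1 (p i).2) →
        ∀ x y, q.toFun x = q.toFun y → r x y

/-- A pure epimorphism of `S`-acts. -/
def IsPureEpi {X Y : SAct S} (ψ : SMap X Y) : Prop :=
  Function.Surjective ψ.toFun ∧
    ∀ (M : SAct S), FinPresented M → ∀ f : SMap M Y, ∃ g : SMap M X, ψ.comp g = f

/-- The class of retracts of coproducts of finitely presented acts. -/
def RIFPClass (S : Type u) [Monoid S] : ActClass S :=
  fun A => ∃ (ι : Type u) (F : ι → SAct S),
    (∀ i, FinPresented (F i)) ∧ ActRetract A (SAct.sigmaCoprod F)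

/-- The one-element `S`-act. -/
def oneAct (S : Type u) [Monoid S] : SAct S :=
  ⟨PUnit, fun _ _ => PUnit.unit, fun _ => rfl, fun _ _ _ => rfl⟩

/-- The unique map to the one-element act. -/
def bangMap (A : SAct S) : SMap A (oneAct S) := ⟨fun _ => PUnit.unit, fun _ _ => rfl⟩

/-- The monoid `S` as a right `S`-act. -/
def regAct (S : Type u) [Monoid S] : SAct S := ⟨S, fun a s => a * s, mul_one, mul_assoc⟩

/-- The set of fixed points of an `S`-act. -/
def FixSet (A : SAct S) : Set A.carrier := {a | ∀ s : S, A.act a s = a}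

/-- The Rees quotient of `Y` collapsing the subset `T` (closed under the action) to a point. -/
def reesQuot (Y : SAct S) (T : Set Y.carrier) (hT : ∀ t ∈ T, ∀ s : S, Y.act t s ∈ T) :
    SAct S where
  carrier := Quot (fun a b => a = b ∨ (a ∈ T ∧ b ∈ T))
  act q s := Quot.lift (fun y => Quot.mk _ (Y.act y s))
    (fun a b hab => by
      rcases hab with h | ⟨ha, hb⟩
      · rw [h]
      · exact Quot.sound (Or.inr ⟨hT a ha s, hT b hb s⟩)) q
  act_one q := by
    induction q using Quot.ind with
    | _ y => exact congrArg (Quot.mk _) (Y.act_one y)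
  act_mul q s t := by
    induction q using Quot.ind with
    | _ y => exact congrArg (Quot.mk _) (Y.act_mul y s t)

/-- The class of monomorphisms whose Rees quotient lies in `𝒳`. -/
def XMonoClass (𝒳 : ActClass S) : MapClass S :=
  fun {X Y} f =>
    Function.Injective f.toFun ∧
      𝒳 (reesQuot Y (Set.range f.toFun)
        (fun t ht s => by
          obtain ⟨x, rfl⟩ := ht
          exact ⟨X.act x s, f.map_act x s⟩))

/-- The type of all `S`-maps (arrows). -/
def ArrowCls (S : Type u) [Monoid S] : Type (u + 1) := Σ (A B : SAct S), SMap A B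

/-- The class of pushouts of maps in `𝒞`. -/
def pushoutsOf (𝒞 : MapClass S) : MapClass S :=
  fun {X P} fbar => ∃ (A B : SAct S) (f : SMap A B) (u : SMap A X) (v : SMap B P),
    𝒞 f ∧ IsPushoutSq f u fbar v

/-- `h` is a transfinite composition of maps in `𝒟`. -/
def IsTransfiniteCompOf (𝒟 : MapClass S) {A L : SAct S} (h : SMap A L) : Prop :=
  ∃ (lam : Ordinal.{u}), Ordinal.omega0 ≤ lam ∧
    ∃ (Φ : LambdaSequence S lam) (h0 : (0 : Ordinal.{u}) < lam),
      (∀ (b : Ordinal.{u}) (hb : b + 1 < lam),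
        𝒟 (Φ.seq.map b (b + 1) (le_self_add (a := b) (b := 1)) hb)) ∧
      Φ.seq.obj 0 h0 = A ∧ Φ.cocone.pt = L ∧ HEq (Φ.cocone.ι 0 h0) h

/-- `ret(𝒞)`: retracts of transfinite compositions of pushouts of maps in `𝒞`. -/
def retClass (𝒞 : MapClass S) : MapClass S :=
  fun {A _} g => ∃ (B : SAct S) (f : SMap A B),
    IsTransfiniteCompOf (pushoutsOf 𝒞) f ∧ RetractOfMap g f

/-- The class of pure epimorphisms. -/
def PureEpiClass (S : Type u) [Monoid S] : MapClass S := fun {_ _} f => IsPureEpi f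

/-- The subact `{z}` of `S`, for a left zero `z`. -/
def zSub (z : S) (hz : ∀ s : S, z * s = z) : SAct S :=
  (regAct S).sub {z} (fun t ht s => by
    have ht' : t = z := ht
    rw [ht']; exact hz s)

/-- The inclusion `{z} → S`, for a left zero `z`. -/
def zIncl (z : S) (hz : ∀ s : S, z * s = z) : SMap (zSub z hz) (regAct S) :=
  ⟨fun t => t.1, fun _ _ => rfl⟩

/-- The subact `K_d = g⁻¹(d)` of `C`, for a fixed point `d` of `D`. -/
def kerAct {C D : SAct S} (g : SMap C D) (d : D.carrier) (hd : d ∈ FixSet D) : SAct S :=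
  C.sub {c | g.toFun c = d} (fun c hc s => by
    simp only [Set.mem_setOf_eq] at hc ⊢
    rw [g.map_act, hc]
    exact hd s)

/-- A centred `S`-act: an act with exactly one fixed point. -/
def CAct (S : Type u) [Monoid S] : Type (u + 1) :=
  {A : SAct S // ∃! a : A.carrier, ∀ s : S, A.act a s = a}

/-- A class of maps of centred `S`-acts. -/
abbrev MapClassC (S : Type u) [Monoid S] : Type (u + 1) :=
  ∀ (A B : CAct S), SMap A.1 B.1 → Prop

/-- `C^□` in the category of centred `S`-acts. -/
def rlpCC (𝒞 : MapClassC S) : MapClassC S :=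
  fun _ _ g => ∀ (X Y : CAct S) (f : SMap X.1 Y.1), 𝒞 X Y f → Lifts f g

/-- `□C` in the category of centred `S`-acts. -/
def llpCC (𝒞 : MapClassC S) : MapClassC S :=
  fun _ _ f => ∀ (X Y : CAct S) (g : SMap X.1 Y.1), 𝒞 X Y g → Lifts f g

/-- A weak factorization system in the category of centred `S`-acts. -/
structure IsWFSC (L R : MapClassC S) : Prop where
  rlp_eq : ∀ (A B : CAct S) (g : SMap A.1 B.1), R A B g ↔ rlpCC L A B g
  llp_eq : ∀ (A B : CAct S) (f : SMap A.1 B.1), L A B f ↔ llpCC R A B f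
  factor : ∀ (A B : CAct S) (h : SMap A.1 B.1),
    ∃ (C : CAct S) (f : SMap A.1 C.1) (g : SMap C.1 B.1), L A C f ∧ R C B g ∧ g.comp f = h

/-- The one-element centred `S`-act `0`. -/
def oneCAct (S : Type u) [Monoid S] : CAct S :=
  ⟨oneAct S, PUnit.unit, fun _ => rfl, fun _ _ => rfl⟩

/-- The unique map `0 → X` of centred `S`-acts. -/
noncomputable def zeroTo (X : CAct S) : SMap (oneCAct S).1 X.1 :=
  ⟨fun _ => X.2.choose, fun _ s => (X.2.choose_spec.1 s).symm⟩

/-! In a square `g ∘ u = v ∘ f` with `f : X → Y` in `U_Pr` and `g` onto, a diagonal is obtained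
by gluing `u ∘ f⁻¹` on `im f` with a lift of `v` on the projective complement `Y ∖ im f`;
the two pieces glue because `Y ∖ im f` is a subact. Every `h : X → Y` factors as `X → X ⊔ F(Y) → Y` through the free act
`F(Y)` on the underlying set of `Y`, the second map sending `(y, s)` to `y s`; the first map is
in `U_Pr` and the second is onto. The usual retract argument then identifies `□E` with the
retracts of coproduct injections `X → X ⊔ F(Z)`, and these lie in `U_Pr`: their complement
splits the evaluation map of a free act. -/

theorem SMap.ext {A B : SAct S} {f g : SMap A B} (h : ∀ a, f.toFun a = g.toFun a) : f = g := by
  cases f; cases g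
  congr
  exact funext h

theorem SMap.congr_toFun {A B : SAct S} {f g : SMap A B} (h : f = g) (a : A.carrier) :
    f.toFun a = g.toFun a :=
  h ▸ rfl

abbrev SAct.free (Z : Type u) : SAct S where
  carrier := Z × S
  act p s := (p.1, p.2 * s)
  act_one p := by simp
  act_mul p s t := by simp [mul_assoc]

def SAct.evalFree (A : SAct S) : SMap (SAct.free A.carrier) A :=
  ⟨fun p => A.act p.1 p.2, fun p s => (A.act_mul p.1 p.2 s).symm⟩

def SMap.inl (A B : SAct S) : SMap A (A.coprod B) := ⟨Sum.inl, fun _ _ => rfl⟩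

def SMap.inr (A B : SAct S) : SMap B (A.coprod B) := ⟨Sum.inr, fun _ _ => rfl⟩

def SMap.coprodDesc {A B C : SAct S} (f : SMap A C) (g : SMap B C) :
    SMap (A.coprod B) C where
  toFun := Sum.elim f.toFun g.toFun
  map_act x s := by cases x <;> simp [SAct.coprod, SMap.map_act]

theorem SMap.coprodDesc_comp_inl {A B C : SAct S} (f : SMap A C) (g : SMap B C) :
    (f.coprodDesc g).comp (SMap.inl A B) = f :=
  SMap.ext fun _ => rfl

theorem ProjectiveAct.of_actRetract {P Q : SAct S} (hQP : ActRetract Q P)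
    (hP : ProjectiveAct P) : ProjectiveAct Q := by
  obtain ⟨α, β, hβα⟩ := hQP
  intro A B q hq u
  obtain ⟨l, hl⟩ := hP q hq (u.comp β)
  refine ⟨l.comp α, SMap.ext fun a => ?_⟩
  calc q.toFun (l.toFun (α.toFun a)) = u.toFun (β.toFun (α.toFun a)) := SMap.congr_toFun hl _
    _ = u.toFun a := congrArg u.toFun (SMap.congr_toFun hβα a)

theorem projectiveAct_free (Z : Type u) : ProjectiveAct (SAct.free (S := S) Z) := by
  intro A B q hq u
  choose c hc using fun z : Z => hq (u.toFun (z, 1))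
  refine ⟨⟨fun p => A.act (c p.1) p.2, fun p s => (A.act_mul _ _ _).symm⟩,
    SMap.ext fun p => ?_⟩
  calc q.toFun (A.act (c p.1) p.2) = B.act (u.toFun (p.1, 1)) p.2 := by rw [q.map_act, hc]
    _ = u.toFun (p.1, p.2) := by rw [← u.map_act]; simp [SAct.free]

section Complement

variable {X Y : SAct S} (f : SMap X Y)
  (hu : ∀ (y : Y.carrier) (s : S), Y.act y s ∈ Set.range f.toFun → y ∈ Set.range f.toFun)

def complAct : SAct S :=
  Y.sub (Set.range f.toFun)ᶜ (fun t ht s hmem => ht (hu t s hmem))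

theorem exists_extend_of_unitary {A : SAct S} (hinj : Function.Injective f.toFun)
    (u : SMap X A) (w : SMap (complAct f hu) A) :
    ∃ e : SMap Y A, e.comp f = u ∧ ∀ t : (complAct f hu).carrier, e.toFun t.1 = w.toFun t := by
  classical
  have preimage_act : ∀ {y : Y.carrier} (hy : y ∈ Set.range f.toFun) (s : S),
      ∃ hys : Y.act y s ∈ Set.range f.toFun, hys.choose = X.act hy.choose s := fun {y} hy s =>
    have hys : Y.act y s ∈ Set.range f.toFun :=
      ⟨X.act hy.choose s, by rw [f.map_act, hy.choose_spec]⟩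
    ⟨hys, hinj (by rw [hys.choose_spec, f.map_act, hy.choose_spec])⟩
  let e : Y.carrier → A.carrier := fun y =>
    if hy : y ∈ Set.range f.toFun then u.toFun hy.choose else w.toFun ⟨y, hy⟩
  refine ⟨⟨e, fun y s => ?_⟩, SMap.ext fun x => ?_, fun t => dif_neg t.2⟩
  · by_cases hy : y ∈ Set.range f.toFun
    · obtain ⟨hys, hchoose⟩ := preimage_act hy s
      simp only [e, dif_pos hy, dif_pos hys, hchoose, u.map_act]
    · have hys : Y.act y s ∉ Set.range f.toFun := fun hmem => hy (hu y s hmem)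
      simp only [e, dif_neg hy, dif_neg hys]
      exact w.map_act ⟨y, hy⟩ s
  · have hx : f.toFun x ∈ Set.range f.toFun := ⟨x, rfl⟩
    exact (dif_pos hx).trans (congrArg u.toFun (hinj hx.choose_spec))

end Complement

theorem lifts_of_mem_uxClass {X Y A B : SAct S} {f : SMap X Y} {g : SMap A B}
    (hf : UXClass ProjectiveAct f) (hg : Function.Surjective g.toFun) : Lifts f g := by
  obtain ⟨hinj, hu, hproj⟩ := hf
  intro u v hsq
  let incl : SMap (complAct f hu) Y := ⟨fun t => t.1, fun _ _ => rfl⟩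
  obtain ⟨k, hk⟩ := hproj g hg (v.comp incl)
  obtain ⟨e, hef, hek⟩ := exists_extend_of_unitary f hu hinj u k
  refine ⟨e, hef, SMap.ext fun y => ?_⟩
  by_cases hy : y ∈ Set.range f.toFun
  · obtain ⟨x, rfl⟩ := hy
    calc g.toFun (e.toFun (f.toFun x)) = g.toFun (u.toFun x) :=
          congrArg g.toFun (SMap.congr_toFun hef x)
      _ = v.toFun (f.toFun x) := SMap.congr_toFun hsq x
  · exact (congrArg g.toFun (hek ⟨y, hy⟩)).trans (SMap.congr_toFun hk ⟨y, hy⟩)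

section RetractOfInl

variable {X Y : SAct S} {Z : Type u} {f : SMap X Y}

theorem mem_range_of_retractOfMap_inl {α : SMap Y (X.coprod (SAct.free Z))}
    {β : SMap (X.coprod (SAct.free Z)) Y} (hβα : β.comp α = SMap.id Y)
    (hβinl : β.comp (SMap.inl X (SAct.free Z)) = f) {y : Y.carrier} {x : X.carrier}
    (hx : α.toFun y = Sum.inl x) : y ∈ Set.range f.toFun :=
  ⟨x, (SMap.congr_toFun hβinl x).symm.trans
    ((congrArg β.toFun hx.symm).trans (SMap.congr_toFun hβα y))⟩

theorem isUnitaryMono_of_retractOfMap_inl (hf : RetractOfMap f (SMap.inl X (SAct.free Z))) :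
    IsUnitaryMono f := by
  obtain ⟨α, β, hβα, hαf, hβinl⟩ := hf
  have hαf' : ∀ x, α.toFun (f.toFun x) = Sum.inl x := SMap.congr_toFun hαf
  refine ⟨fun a b hab => Sum.inl_injective (by rw [← hαf', ← hαf', hab]), ?_⟩
  rintro y s ⟨x, hx⟩
  cases hy : α.toFun y with
  | inl x' => exact mem_range_of_retractOfMap_inl hβα hβinl hy
  | inr p =>
    have : α.toFun (Y.act y s) = Sum.inr (p.1, p.2 * s) := by rw [α.map_act, hy]; rfl
    rw [← hx, hαf'] at this
    exact absurd this Sum.inl_ne_inr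

theorem projectiveAct_complAct_of_retractOfMap_inl
    (hu : ∀ (y : Y.carrier) (s : S), Y.act y s ∈ Set.range f.toFun → y ∈ Set.range f.toFun)
    (hf : RetractOfMap f (SMap.inl X (SAct.free Z))) : ProjectiveAct (complAct f hu) := by
  obtain ⟨α, β, hβα, -, hβinl⟩ := hf
  -- `Y ∖ im f` is a retract of the free act on itself: `t` is sent to `(β (z, 1), s)`
  -- where `α t = (z, s)`.
  let T := complAct f hu
  have exists_inr : ∀ t : T.carrier, ∃ p, α.toFun t.1 = Sum.inr p := fun t => by
    cases ht : α.toFun t.1 with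
    | inl x => exact absurd (mem_range_of_retractOfMap_inl hβα hβinl ht) t.2
    | inr p => exact ⟨p, rfl⟩
  choose p hp using exists_inr
  have hp_act : ∀ (t : T.carrier) (s : S), p (T.act t s) = ((p t).1, (p t).2 * s) := fun t s =>
    Sum.inr_injective (α := X.carrier) <| by
      rw [← hp]; exact (α.map_act t.1 s).trans (by rw [hp]; rfl)
  let gen : T.carrier → Y.carrier := fun t => β.toFun ((SMap.inr _ _).toFun ((p t).1, 1))
  have hgen : ∀ t : T.carrier, Y.act (gen t) (p t).2 = t.1 := fun t => by
    have : (X.coprod (SAct.free Z)).act ((SMap.inr _ _).toFun ((p t).1, 1)) (p t).2 =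
        α.toFun t.1 := by
      rw [hp]; exact congrArg (fun s => Sum.inr ((p t).1, s)) (one_mul _)
    rw [← β.map_act, this]
    exact SMap.congr_toFun hβα t.1
  have hgen_mem : ∀ t : T.carrier, gen t ∉ Set.range f.toFun := by
    rintro t ⟨x, hx⟩
    exact t.2 ⟨X.act x (p t).2, by rw [f.map_act, hx, hgen]⟩
  have gen_act : ∀ t s, gen (T.act t s) = gen t := fun t s => by simp only [gen, hp_act]
  let σ : SMap T (SAct.free T.carrier) :=
    ⟨fun t => (⟨gen t, hgen_mem t⟩, (p t).2), fun t s =>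
      Prod.ext (Subtype.ext (gen_act t s))
        (show (p (T.act t s)).2 = (p t).2 * s from congrArg Prod.snd (hp_act t s))⟩
  exact (projectiveAct_free _).of_actRetract
    ⟨σ, SAct.evalFree T, SMap.ext fun t => Subtype.ext (hgen t)⟩

theorem mem_uxClass_of_retractOfMap_inl (hf : RetractOfMap f (SMap.inl X (SAct.free Z))) :
    UXClass ProjectiveAct f :=
  have hunit := isUnitaryMono_of_retractOfMap_inl hf
  ⟨hunit.1, hunit.2, projectiveAct_complAct_of_retractOfMap_inl hunit.2 hf⟩

end RetractOfInl

def factorAct (X Y : SAct S) : SAct S := X.coprod (SAct.free Y.carrier)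

def factorRight {X Y : SAct S} (h : SMap X Y) : SMap (factorAct X Y) Y :=
  h.coprodDesc (SAct.evalFree Y)

theorem factorRight_surjective {X Y : SAct S} (h : SMap X Y) :
    Function.Surjective (factorRight h).toFun :=
  fun y => ⟨Sum.inr (y, 1), Y.act_one y⟩

theorem inl_mem_uxClass (X : SAct S) (Z : Type u) :
    UXClass ProjectiveAct (SMap.inl X (SAct.free Z)) :=
  mem_uxClass_of_retractOfMap_inl
    ⟨SMap.id _, SMap.id _, SMap.ext fun _ => rfl, SMap.ext fun _ => rfl, SMap.ext fun _ => rfl⟩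

theorem statement12 :
    IsWFS (UXClass (fun P : SAct S => ProjectiveAct P)) (EpiClass S) := by
  refine ⟨fun g => ⟨fun hg _ _ f hf => lifts_of_mem_uxClass hf hg, fun hg b => ?_⟩,
    fun f => ⟨fun hf _ _ g hg => lifts_of_mem_uxClass hf hg, fun hf => ?_⟩,
    fun h => ⟨factorAct _ _, SMap.inl _ _, factorRight h, inl_mem_uxClass _ _,
      factorRight_surjective h, SMap.coprodDesc_comp_inl _ _⟩⟩
  · obtain ⟨l, -, hl⟩ := hg _ (inl_mem_uxClass _ _) (SMap.id _) (factorRight g)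
      (SMap.coprodDesc_comp_inl _ _).symm
    exact ⟨l.toFun (Sum.inr (b, 1)), (SMap.congr_toFun hl _).trans (SAct.act_one _ b)⟩
  · obtain ⟨l, hlf, hl⟩ := hf (factorRight f) (factorRight_surjective f) (SMap.inl _ _)
      (SMap.id _) (SMap.coprodDesc_comp_inl _ _)
    exact mem_uxClass_of_retractOfMap_inl
      ⟨l, factorRight f, hl, hlf, SMap.coprodDesc_comp_inl _ _⟩
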